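/- arXiv:2502.05306 — 2 statements merged into one kernel-verified Lean document; each statement's English description precedes it below -/
import Mathlib

section
/- In a dagger category, for any map f : A ⟶ B the following are equivalent: (i) f is †-Drazin (has a †-Drazin inverse); (ii) f† is †-Drazin; (iii) the endomorphism f ≫ f† : A ⟶ A is Drazin (has a Drazin inverse); (iv) the endomorphism f† ≫ f : B ⟶ B is Drazin. -/
/-!
Drazin inverses of endomorphisms are unique, so the Drazin inverse of the self-adjoint map
`f ≫ f†` is itself self-adjoint. This is what makes the two translations work: a †-Drazin
inverse `p` of `f` gives the Drazin inverse `p† ≫ p` of `f ≫ f†`, and a Drazin inverse `d`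
of `f ≫ f†` gives the †-Drazin inverse `f† ≫ d` of `f`. Since `p ↦ p†` takes †-Drazin
inverses of `f` to those of `f†`, the same translation applied to `f†` handles `f† ≫ f`.
-/

open CategoryTheory

universe v u

/-- A dagger on a category: an identity-on-objects contravariant involution. -/
structure Dagger (C : Type u) [Category.{v} C] where
  dag : ∀ {X Y : C}, (X ⟶ Y) → (Y ⟶ X)
  dag_id : ∀ X : C, dag (𝟙 X) = 𝟙 X
  dag_comp : ∀ {X Y Z : C} (f : X ⟶ Y) (g : Y ⟶ Z), dag (f ≫ g) = dag g ≫ dag f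
  dag_dag : ∀ {X Y : C} (f : X ⟶ Y), dag (dag f) = f

/-- Iterated composition power of an endomorphism, with `cpow x 0 = 𝟙 A`. -/
def cpow {C : Type u} [Category.{v} C] {A : C} (x : A ⟶ A) : ℕ → (A ⟶ A)
  | 0 => 𝟙 A
  | n + 1 => cpow x n ≫ x

/-- `p` is a †-Drazin inverse of `f`. -/
def IsDagDrazinInv {C : Type u} [Category.{v} C] (D : Dagger C)
    {A B : C} (f : A ⟶ B) (p : B ⟶ A) : Prop :=
  (∃ k : ℕ, cpow (f ≫ D.dag f) k ≫ f ≫ p = cpow (f ≫ D.dag f) k ∧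
    p ≫ f ≫ cpow (D.dag f ≫ f) k = cpow (D.dag f ≫ f) k) ∧
  p ≫ f ≫ p = p ∧
  D.dag (f ≫ p) = f ≫ p ∧
  D.dag (p ≫ f) = p ≫ f

/-- `d` is a Drazin inverse of the endomorphism `x`. -/
def IsDrazinInv {C : Type u} [Category.{v} C] {A : C} (x d : A ⟶ A) : Prop :=
  (∃ k : ℕ, cpow x (k + 1) ≫ d = cpow x k) ∧
  d ≫ x ≫ d = d ∧
  x ≫ d = d ≫ x

variable {C : Type u} [Category.{v} C] {A B : C}

section Cpow

@[simp]
lemma cpow_zero (x : A ⟶ A) : cpow x 0 = 𝟙 A := rfl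

lemma cpow_succ (x : A ⟶ A) (n : ℕ) : cpow x (n + 1) = cpow x n ≫ x := rfl

lemma cpow_succ' (x : A ⟶ A) (n : ℕ) : cpow x (n + 1) = x ≫ cpow x n := by
  induction n with
  | zero => simp [cpow_succ]
  | succ n ih =>
    conv_lhs => rw [cpow_succ, ih]
    rw [Category.assoc, ← cpow_succ]

lemma cpow_comm {x e : A ⟶ A} (h : x ≫ e = e ≫ x) (n : ℕ) :
    cpow x n ≫ e = e ≫ cpow x n := by
  induction n with
  | zero => simp
  | succ n ih => rw [cpow_succ, Category.assoc, h, reassoc_of% ih]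

lemma cpow_comp_of_comm {x e : A ⟶ A} (h : x ≫ e = e ≫ x) (n : ℕ) :
    cpow (x ≫ e) n = cpow x n ≫ cpow e n := by
  induction n with
  | zero => simp
  | succ n ih =>
    rw [cpow_succ, ih, cpow_succ, cpow_succ, Category.assoc, reassoc_of% cpow_comm h.symm n]
    simp only [Category.assoc]

lemma cpow_succ_of_idem {p : A ⟶ A} (h : p ≫ p = p) (n : ℕ) : cpow p (n + 1) = p := by
  induction n with
  | zero => simp [cpow_succ]
  | succ n ih => rw [cpow_succ, ih, h]

lemma comp_cpow_comp (f : A ⟶ B) (g : B ⟶ A) (n : ℕ) :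
    f ≫ cpow (g ≫ f) n = cpow (f ≫ g) n ≫ f := by
  induction n with
  | zero => simp
  | succ n ih => simp only [cpow_succ', Category.assoc, ← ih]

lemma Dagger.dag_cpow (D : Dagger C) (x : A ⟶ A) (n : ℕ) :
    D.dag (cpow x n) = cpow (D.dag x) n := by
  induction n with
  | zero => simp [D.dag_id]
  | succ n ih => rw [cpow_succ, D.dag_comp, ih, cpow_succ']

end Cpow

section Drazin

variable {x d e : A ⟶ A}

lemma cpow_succ_comp_of_le {k m : ℕ} (h : cpow x (k + 1) ≫ d = cpow x k) (hkm : k ≤ m) :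
    cpow x (m + 1) ≫ d = cpow x m := by
  induction m, hkm using Nat.le_induction with
  | base => exact h
  | succ m _ ih => rw [cpow_succ' x (m + 1), Category.assoc, ih, ← cpow_succ']

lemma IsDrazinInv.unique (hd : IsDrazinInv x d) (he : IsDrazinInv x e) : d = e := by
  obtain ⟨⟨kd, hkd⟩, hdxd, hxd⟩ := hd
  obtain ⟨⟨ke, hke⟩, hexe, hxe⟩ := he
  set k := max kd ke
  have hd1 : cpow x (k + 1) ≫ d = cpow x k := cpow_succ_comp_of_le hkd (le_max_left _ _)
  have he1 : cpow x (k + 1) ≫ e = cpow x k := cpow_succ_comp_of_le hke (le_max_right _ _)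
  have hex_idem : (e ≫ x) ≫ (e ≫ x) = e ≫ x := by simp only [Category.assoc, reassoc_of% hexe]
  have hxd_idem : (x ≫ d) ≫ (x ≫ d) = x ≫ d := by simp only [Category.assoc, hdxd]
  have he : e = e ≫ x ≫ d :=
    calc e = cpow (e ≫ x) (k + 1) ≫ e := by rw [cpow_succ_of_idem hex_idem, Category.assoc, hexe]
    _ = cpow e (k + 1) ≫ cpow x k := by rw [cpow_comp_of_comm hxe.symm, Category.assoc, he1]
    _ = cpow (e ≫ x) (k + 1) ≫ d := by rw [cpow_comp_of_comm hxe.symm, Category.assoc, hd1]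
    _ = e ≫ x ≫ d := by rw [cpow_succ_of_idem hex_idem, Category.assoc]
  have hd : d = e ≫ x ≫ d :=
    calc d = d ≫ cpow (x ≫ d) (k + 1) := by rw [cpow_succ_of_idem hxd_idem, hdxd]
    _ = cpow x k ≫ cpow d (k + 1) := by
      rw [cpow_comp_of_comm hxd, ← Category.assoc, ← cpow_comm hxd, hd1]
    _ = e ≫ cpow (x ≫ d) (k + 1) := by
      rw [← he1, cpow_comm hxe, Category.assoc, cpow_comp_of_comm hxd]
    _ = e ≫ x ≫ d := by rw [cpow_succ_of_idem hxd_idem]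
  rw [hd, ← he]

lemma IsDrazinInv.dag (D : Dagger C) (hd : IsDrazinInv x d) :
    IsDrazinInv (D.dag x) (D.dag d) := by
  obtain ⟨⟨k, hk⟩, hdxd, hxd⟩ := hd
  refine ⟨⟨k, ?_⟩, ?_, ?_⟩
  · rw [← D.dag_cpow, ← D.dag_cpow, ← hk, ← D.dag_comp, cpow_comm hxd]
  · rw [← D.dag_comp, ← D.dag_comp, Category.assoc, hdxd]
  · rw [← D.dag_comp, ← D.dag_comp, hxd]

lemma IsDrazinInv.dag_eq_self (D : Dagger C) (hx : D.dag x = x) (hd : IsDrazinInv x d) :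
    D.dag d = d :=
  (hx ▸ hd.dag D).unique hd

end Drazin

lemma Dagger.dag_comp_dag (D : Dagger C) (f : A ⟶ B) : D.dag (f ≫ D.dag f) = f ≫ D.dag f := by
  rw [D.dag_comp, D.dag_dag]

section DagDrazin

variable {D : Dagger C} {f : A ⟶ B}

lemma IsDagDrazinInv.dag {p : B ⟶ A} (hp : IsDagDrazinInv D f p) :
    IsDagDrazinInv D (D.dag f) (D.dag p) := by
  obtain ⟨⟨k, hkf, hkp⟩, hpfp, hfp, hpf⟩ := hp
  refine ⟨⟨k, ?_, ?_⟩, ?_, ?_, ?_⟩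
  · simpa only [D.dag_comp, D.dag_cpow, D.dag_dag, Category.assoc] using congrArg D.dag hkp
  · simpa only [D.dag_comp, D.dag_cpow, D.dag_dag, Category.assoc] using congrArg D.dag hkf
  · simp only [← D.dag_comp, Category.assoc, hpfp]
  · rw [← D.dag_comp, D.dag_dag, hpf]
  · rw [← D.dag_comp, D.dag_dag, hfp]

lemma IsDagDrazinInv.isDrazinInv {p : B ⟶ A} (hp : IsDagDrazinInv D f p) :
    IsDrazinInv (f ≫ D.dag f) (D.dag p ≫ p) := by
  obtain ⟨⟨k, hkf, -⟩, hpfp, hfp, hpf⟩ := hp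
  have hxd : (f ≫ D.dag f) ≫ D.dag p ≫ p = f ≫ p := by
    rw [Category.assoc, reassoc_of% (D.dag_comp p f).symm, hpf, Category.assoc, hpfp]
  have hdx : (D.dag p ≫ p) ≫ f ≫ D.dag f = f ≫ p :=
    calc (D.dag p ≫ p) ≫ f ≫ D.dag f = D.dag ((f ≫ D.dag f) ≫ D.dag p ≫ p) := by
          simp only [D.dag_comp, D.dag_dag, Category.assoc]
    _ = f ≫ p := by rw [hxd, hfp]
  refine ⟨⟨k, by rw [cpow_succ, Category.assoc, hxd, hkf]⟩, ?_, hxd.trans hdx.symm⟩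
  rw [hxd, Category.assoc, hpfp]

lemma IsDrazinInv.isDagDrazinInv (D : Dagger C) {d : A ⟶ A}
    (hd : IsDrazinInv (f ≫ D.dag f) d) :
    IsDagDrazinInv D f (D.dag f ≫ d) := by
  have hdd : D.dag d = d := hd.dag_eq_self D (D.dag_comp_dag f)
  obtain ⟨⟨k, hk⟩, hdxd, hxd⟩ := hd
  refine ⟨⟨k + 1, ?_, ?_⟩, ?_, ?_, ?_⟩
  · rw [← Category.assoc f, ← Category.assoc, ← cpow_succ]
    exact cpow_succ_comp_of_le hk k.le_succ
  · calc (D.dag f ≫ d) ≫ f ≫ cpow (D.dag f ≫ f) (k + 1)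
        = D.dag f ≫ d ≫ cpow (f ≫ D.dag f) (k + 1) ≫ f := by
          rw [comp_cpow_comp, Category.assoc]
      _ = D.dag f ≫ cpow (f ≫ D.dag f) k ≫ f := by
          rw [← reassoc_of% cpow_comm hxd, reassoc_of% hk]
      _ = cpow (D.dag f ≫ f) (k + 1) := by rw [← comp_cpow_comp, cpow_succ', Category.assoc]
  · simp only [Category.assoc] at hdxd ⊢
    rw [hdxd]
  · simpa only [D.dag_comp, D.dag_dag, hdd, Category.assoc] using hxd.symm
  · simp only [D.dag_comp, D.dag_dag, hdd, Category.assoc]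

end DagDrazin

lemma exists_isDagDrazinInv_iff_exists_isDrazinInv (D : Dagger C) (f : A ⟶ B) :
    (∃ p, IsDagDrazinInv D f p) ↔ ∃ d, IsDrazinInv (f ≫ D.dag f) d :=
  ⟨fun ⟨_, hp⟩ => ⟨_, hp.isDrazinInv⟩, fun ⟨_, hd⟩ => ⟨_, hd.isDagDrazinInv D⟩⟩

lemma exists_isDagDrazinInv_dag_iff (D : Dagger C) (f : A ⟶ B) :
    (∃ q, IsDagDrazinInv D (D.dag f) q) ↔ ∃ p, IsDagDrazinInv D f p :=
  ⟨fun ⟨_, hq⟩ => ⟨_, D.dag_dag f ▸ hq.dag⟩, fun ⟨_, hp⟩ => ⟨_, hp.dag⟩⟩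

/-- `f` is †-Drazin iff `f†` is †-Drazin iff `f ≫ f†` is Drazin iff `f† ≫ f` is Drazin. -/
theorem dagDrazin_tfae {C : Type u} [Category.{v} C] (D : Dagger C)
    {A B : C} (f : A ⟶ B) :
    List.TFAE
      [∃ p : B ⟶ A, IsDagDrazinInv D f p,
       ∃ q : A ⟶ B, IsDagDrazinInv D (D.dag f) q,
       ∃ d : A ⟶ A, IsDrazinInv (f ≫ D.dag f) d,
       ∃ e : B ⟶ B, IsDrazinInv (D.dag f ≫ f) e] := by
  tfae_have 2 ↔ 1 := exists_isDagDrazinInv_dag_iff D f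
  tfae_have 1 ↔ 3 := exists_isDagDrazinInv_iff_exists_isDrazinInv D f
  tfae_have 2 ↔ 4 := by
    simpa only [D.dag_dag] using exists_isDagDrazinInv_iff_exists_isDrazinInv D (D.dag f)
  tfae_finish
end

section
/- In a dagger category, the following are equivalent for a map f : A ⟶ B: (i) f has a Moore-Penrose inverse; (ii) f is a †-Drazin inverse, i.e. there exists a map h : B ⟶ A such that f is a †-Drazin inverse of h; (iii) there exists g : B ⟶ A such that g is a †-Drazin inverse of f and f is a †-Drazin inverse of g. -/
open CategoryTheory

universe v u

/-- `p` is a Moore-Penrose inverse of `f`. -/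
def IsMPInv {C : Type u} [Category.{v} C] (D : Dagger C)
    {A B : C} (f : A ⟶ B) (p : B ⟶ A) : Prop :=
  f ≫ p ≫ f = f ∧
  p ≫ f ≫ p = p ∧
  D.dag (f ≫ p) = f ≫ p ∧
  D.dag (p ≫ f) = p ≫ f

/-!
If `f` is a †-Drazin inverse of `h`, then D†.2–D†.4 say that `f ≫ h ≫ f = f` with `f ≫ h` and
`h ≫ f` self-adjoint, and then `h ≫ f ≫ h` satisfies all four Moore-Penrose axioms. Conversely, for a Moore-Penrose
inverse `g` of `f` the self-adjointness of `f ≫ g` gives `f† ≫ f ≫ g = (f ≫ g ≫ f)† = f†`, which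
is D†.1 with `k = 1`; by the symmetry of the Moore-Penrose axioms the same holds with `f`, `g`
exchanged.
-/

namespace Dagger

variable {C : Type u} [Category.{v} C] (D : Dagger C)

lemma dag_comp_comp_eq_dag {A B : C} {f : A ⟶ B} {g : B ⟶ A} (hfgf : f ≫ g ≫ f = f)
    (hfg : D.dag (f ≫ g) = f ≫ g) : D.dag f ≫ f ≫ g = D.dag f := by
  rw [← hfg, ← D.dag_comp, Category.assoc, hfgf]

lemma comp_comp_dag_eq_dag {A B : C} {f : A ⟶ B} {g : B ⟶ A} (hfgf : f ≫ g ≫ f = f)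
    (hgf : D.dag (g ≫ f) = g ≫ f) : g ≫ f ≫ D.dag f = D.dag f := by
  rw [← Category.assoc, ← hgf, ← D.dag_comp, hfgf]

end Dagger

section

variable {C : Type u} [Category.{v} C] {D : Dagger C}

lemma cpow_one {A : C} (x : A ⟶ A) : cpow x 1 = x :=
  Category.id_comp x

lemma IsMPInv.symm {A B : C} {f : A ⟶ B} {g : B ⟶ A} (h : IsMPInv D f g) : IsMPInv D g f :=
  ⟨h.2.1, h.1, h.2.2.2, h.2.2.1⟩

lemma IsMPInv.isDagDrazinInv {A B : C} {f : A ⟶ B} {g : B ⟶ A} (h : IsMPInv D f g) :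
    IsDagDrazinInv D f g := by
  obtain ⟨hfgf, hgfg, hfg, hgf⟩ := h
  refine ⟨⟨1, ?_, ?_⟩, hgfg, hfg, hgf⟩
  · simp only [cpow_one, Category.assoc, D.dag_comp_comp_eq_dag hfgf hfg]
  · simp only [cpow_one, ← Category.assoc, D.comp_comp_dag_eq_dag hfgf hgf]

lemma isMPInv_comp_comp {A B : C} {f : A ⟶ B} {h : B ⟶ A} (hfhf : f ≫ h ≫ f = f)
    (hfh : D.dag (f ≫ h) = f ≫ h) (hhf : D.dag (h ≫ f) = h ≫ f) :
    IsMPInv D f (h ≫ f ≫ h) := by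
  have left : f ≫ h ≫ f ≫ h = f ≫ h := by rw [reassoc_of% hfhf]
  have right : (h ≫ f ≫ h) ≫ f = h ≫ f := by simp only [Category.assoc, hfhf]
  refine ⟨?_, ?_, ?_, ?_⟩
  · rw [right, hfhf]
  · simp only [Category.assoc, left]
  · rw [left, hfh]
  · rw [right, hhf]

lemma IsDagDrazinInv.isMPInv_comp_comp {A B : C} {h : B ⟶ A} {f : A ⟶ B}
    (hd : IsDagDrazinInv D h f) : IsMPInv D f (h ≫ f ≫ h) :=
  _root_.isMPInv_comp_comp hd.2.1 hd.2.2.2 hd.2.2.1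

end

/-- `f` is Moore-Penrose iff `f` is a †-Drazin inverse iff `f` has a †-Drazin inverse
of which it is itself the †-Drazin inverse. -/
theorem mp_tfae_dagDrazinInv {C : Type u} [Category.{v} C] (D : Dagger C)
    {A B : C} (f : A ⟶ B) :
    List.TFAE
      [∃ g : B ⟶ A, IsMPInv D f g,
       ∃ h : B ⟶ A, IsDagDrazinInv D h f,
       ∃ g : B ⟶ A, IsDagDrazinInv D f g ∧ IsDagDrazinInv D g f] := by
  tfae_have 1 → 3
  | ⟨g, hg⟩ => ⟨g, hg.isDagDrazinInv, hg.symm.isDagDrazinInv⟩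
  tfae_have 3 → 2
  | ⟨g, _, hgf⟩ => ⟨g, hgf⟩
  tfae_have 2 → 1
  | ⟨h, hd⟩ => ⟨h ≫ f ≫ h, hd.isMPInv_comp_comp⟩
  tfae_finish
end
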